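/- arXiv:2110.11814 — 10 statements merged into one kernel-verified Lean document; each statement's English description precedes it below -/
import Mathlib

section
/- Suppose six real numbers d_ga, d_gb, d_ab, d_ah, d_bh, d_gh are realized by the 4-sunlet distance system with parameters (μ_a, μ_b, μ_g, μ_h, s_a, s_b, t_a, t_b, γ_a, γ_b) in which additionally t_a > 0 and t_b > 0. Then d_gh + d_ab > d_ah + d_gb and d_gh + d_ab > d_bh + d_ga (the 4-point condition fails strictly in the direction of the pairing {a,b},{g,h}), and moreover (d_gh + d_ab − d_ah − d_gb)/(d_ab + d_ga − d_gb) + (d_gh + d_ab − d_bh − d_ga)/(d_ab + d_gb − d_ga) ≤ 1 (both denominators being strictly positive). -/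
/-- Six pairwise distances `dga dgb dab dah dbh dgh` are realized by the 4-sunlet
distance system with parameters `(μa, μb, μg, μh, sa, sb, ta, tb, γa, γb)`:
the average pairwise distances on the semidirected binary 4-sunlet with leaves
`a, g, b, h` in circular order `(a,g,b,h)` and hybrid leaf `h`. -/
def Sunlet4Realizes (dga dgb dab dah dbh dgh
    μa μb μg μh sa sb ta tb γa γb : ℝ) : Prop :=
  0 ≤ μa ∧ 0 ≤ μb ∧ 0 ≤ μg ∧ 0 ≤ μh ∧ 0 ≤ sa ∧ 0 ≤ sb ∧ 0 ≤ ta ∧ 0 ≤ tb ∧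
  0 < γa ∧ γa < 1 ∧ 0 < γb ∧ γb < 1 ∧ γa + γb = 1 ∧
  dga = (μa + ta) + μg ∧
  dgb = (μb + tb) + μg ∧
  dab = (μa + ta) + (μb + tb) ∧
  dah = (μh + sa * γa + sb * γb) + γb * (ta + tb) + μa ∧
  dbh = (μh + sa * γa + sb * γb) + γa * (ta + tb) + μb ∧
  dgh = (μh + sa * γa + sb * γb) + γa * ta + γb * tb + μg

/-- If the six distances are realized by the 4-sunlet distance system with
cycle tree edges of positive lengths `ta > 0` and `tb > 0`, then the 4-point
condition fails strictly in the direction of the pairing {a,b},{g,h}, the two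
denominators are strictly positive, and the realizability criterion holds. -/
theorem sunlet4_realized_necessary_conditions
    (dga dgb dab dah dbh dgh μa μb μg μh sa sb ta tb γa γb : ℝ)
    (hreal : Sunlet4Realizes dga dgb dab dah dbh dgh μa μb μg μh sa sb ta tb γa γb)
    (hta : 0 < ta) (htb : 0 < tb) :
    dgh + dab > dah + dgb ∧
    dgh + dab > dbh + dga ∧
    0 < dab + dga - dgb ∧
    0 < dab + dgb - dga ∧
    (dgh + dab - dah - dgb) / (dab + dga - dgb)
      + (dgh + dab - dbh - dga) / (dab + dgb - dga) ≤ 1 := by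
  obtain ⟨hμa, hμb, hμg, hμh, hsa, hsb, _, _, hγa, hγa1, hγb, hγb1, hγ, hga, hgb, hab, hah, hbh, hgh⟩ := hreal
  subst hga hgb hab hah hbh hgh
  have hγab : γb = 1 - γa := by linarith
  subst hγab
  have hda : (0:ℝ) < μa + ta := by linarith
  have hdb : (0:ℝ) < μb + tb := by linarith
  refine ⟨by nlinarith, by nlinarith, by linarith, by linarith, ?_⟩
  have e1 : (μh + sa * γa + sb * (1-γa)) + γa * ta + (1-γa) * tb + μg + ((μa + ta) + (μb + tb)) - ((μh + sa * γa + sb * (1-γa)) + (1-γa) * (ta + tb) + μa) - ((μb + tb) + μg) = 2 * γa * ta := by ring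
  have e2 : (μh + sa * γa + sb * (1-γa)) + γa * ta + (1-γa) * tb + μg + ((μa + ta) + (μb + tb)) - ((μh + sa * γa + sb * (1-γa)) + γa * (ta + tb) + μb) - ((μa + ta) + μg) = 2 * (1-γa) * tb := by ring
  have e3 : ((μa + ta) + (μb + tb)) + ((μa + ta) + μg) - ((μb + tb) + μg) = 2 * (μa + ta) := by ring
  have e4 : ((μa + ta) + (μb + tb)) + ((μb + tb) + μg) - ((μa + ta) + μg) = 2 * (μb + tb) := by ring
  rw [e1, e2, e3, e4]
  have h1 : 2 * γa * ta / (2 * (μa + ta)) ≤ γa := by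
    rw [div_le_iff₀ (by linarith)]; nlinarith
  have h2 : 2 * (1-γa) * tb / (2 * (μb + tb)) ≤ 1 - γa := by
    rw [div_le_iff₀ (by linarith)]; nlinarith
  linarith
end

section
/- Let d be a metric on the four-point set {a, b, g, h} (write d_xy for d(x,y)). Assume d_gh + d_ab > d_ah + d_gb, d_gh + d_ab > d_bh + d_ga, d_ab + d_ga − d_gb > 0, d_ab + d_gb − d_ga > 0, and (d_gh + d_ab − d_ah − d_gb)/(d_ab + d_ga − d_gb) + (d_gh + d_ab − d_bh − d_ga)/(d_ab + d_gb − d_ga) ≤ 1. Then there exist parameters (μ_a, μ_b, μ_g, μ_h, s_a, s_b, t_a, t_b, γ_a, γ_b) with t_a > 0 and t_b > 0 such that the six pairwise distances of d are realized by the 4-sunlet distance system with these parameters. -/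
/-- Sufficiency: a metric `d` on four points `a = 0, b = 1, g = 2, h = 3`
satisfying the strict 4-point-failure inequalities and the realizability
criterion is realized by the 4-sunlet distance system with `ta, tb > 0`. -/
theorem sunlet4_realizable_of_conditions (d : Fin 4 → Fin 4 → ℝ)
    (hsymm : ∀ x y, d x y = d y x)
    (hzero : ∀ x, d x x = 0)
    (hnonneg : ∀ x y, 0 ≤ d x y)
    (htri : ∀ x y z, d x z ≤ d x y + d y z)
    -- labels: a = 0, b = 1, g = 2, h = 3
    (h1 : d 2 3 + d 0 1 > d 0 3 + d 2 1)
    (h2 : d 2 3 + d 0 1 > d 1 3 + d 2 0)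
    (h3 : 0 < d 0 1 + d 2 0 - d 2 1)
    (h4 : 0 < d 0 1 + d 2 1 - d 2 0)
    (h5 : (d 2 3 + d 0 1 - d 0 3 - d 2 1) / (d 0 1 + d 2 0 - d 2 1)
        + (d 2 3 + d 0 1 - d 1 3 - d 2 0) / (d 0 1 + d 2 1 - d 2 0) ≤ 1) :
    ∃ μa μb μg μh sa sb ta tb γa γb : ℝ, 0 < ta ∧ 0 < tb ∧
      Sunlet4Realizes (d 2 0) (d 2 1) (d 0 1) (d 0 3) (d 1 3) (d 2 3)
        μa μb μg μh sa sb ta tb γa γb := by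
  set A : ℝ := d 0 1 + d 2 0 - d 2 1 with hAdef
  set B : ℝ := d 0 1 + d 2 1 - d 2 0 with hBdef
  set x : ℝ := (d 2 3 + d 0 1 - d 0 3 - d 2 1) / 2 with hxdef
  set y : ℝ := (d 2 3 + d 0 1 - d 1 3 - d 2 0) / 2 with hydef
  have hx : 0 < x := by rw [hxdef]; linarith
  have hy : 0 < y := by rw [hydef]; linarith
  have hA : 0 < A := h3
  have hB : 0 < B := h4
  have h5' : 2 * x / A + 2 * y / B ≤ 1 := by
    have hxx : 2 * x = d 2 3 + d 0 1 - d 0 3 - d 2 1 := by rw [hxdef]; ring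
    have hyy : 2 * y = d 2 3 + d 0 1 - d 1 3 - d 2 0 := by rw [hydef]; ring
    rw [hxx, hyy]; exact h5
  set γa : ℝ := 2 * x / A with hγadef
  set γb : ℝ := 1 - γa with hγbdef
  have hγa0 : 0 < γa := div_pos (by linarith) hA
  have hyB : 0 < 2 * y / B := div_pos (by linarith) hB
  have hγbge : 2 * y / B ≤ γb := by rw [hγbdef]; linarith
  have hγb0 : 0 < γb := lt_of_lt_of_le hyB hγbge
  have hγa1 : γa < 1 := by rw [hγbdef] at hγb0; linarith
  set ta : ℝ := A / 2 with htadef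
  set tb : ℝ := y / γb with htbdef
  have hta0 : 0 < ta := by rw [htadef]; linarith
  have htb0 : 0 < tb := div_pos hy hγb0
  have htbB : tb ≤ B / 2 := by
    rw [htbdef, div_le_div_iff₀ hγb0 (by norm_num : (0:ℝ) < 2)]
    rw [div_le_iff₀ hB] at hγbge
    linarith
  have hγata : γa * ta = x := by
    rw [hγadef, htadef]; field_simp
  have hγbtb : γb * tb = y := by
    rw [htbdef]; field_simp
  refine ⟨0, B / 2 - tb, (d 2 0 + d 2 1 - d 0 1) / 2, (d 0 3 + d 1 3 - d 0 1) / 2,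
    0, 0, ta, tb, γa, γb, hta0, htb0, le_refl 0, by linarith, ?_, ?_, le_refl 0,
    le_refl 0, le_of_lt hta0, le_of_lt htb0, hγa0, hγa1, hγb0, by rw [hγbdef]; linarith,
    by rw [hγbdef]; ring, ?_, ?_, ?_, ?_, ?_, ?_⟩
  · have := htri 0 2 1
    rw [hsymm 0 2] at this
    linarith
  · have := htri 0 3 1
    rw [hsymm 3 1] at this
    linarith
  · rw [htadef, hAdef]; ring
  · rw [hBdef]; ring
  · rw [htadef, hAdef, hBdef]; ring
  · have e : γb * (ta + tb) = ta - γa * ta + γb * tb := by rw [hγbdef]; ring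
    rw [e, hγata, hγbtb, htadef, hAdef, hxdef, hydef]; ring
  · have e : γa * (ta + tb) = γa * ta + tb - γb * tb := by rw [hγbdef]; ring
    rw [e, hγata, hγbtb, hxdef, hydef, hBdef]; ring
  · rw [hγata, hγbtb, hxdef, hydef]; ring
end

section
/- Suppose six real numbers d_ga, d_gb, d_ab, d_ah, d_bh, d_gh are realized by the 4-sunlet distance system with parameters (μ_a, μ_b, μ_g, μ_h, s_a, s_b, t_a, t_b, γ_a, γ_b). Then the following six composite parameters are determined by the distances: μ_g = (1/2)(d_ga + d_gb − d_ab); μ_a + t_a = (1/2)(d_ab + d_ga − d_gb); μ_b + t_b = (1/2)(d_ab + d_gb − d_ga); l_h := μ_h + s_a·γ_a + s_b·γ_b = (1/2)(d_ah + d_bh − d_ab); γ_a·t_a = (1/2)(d_gh + d_ab − d_ah − d_gb); γ_b·t_b = (1/2)(d_gh + d_ab − d_bh − d_ga). In particular, any two parameter tuples realizing the same six distances agree on these six composite quantities. -/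
/-- The six composite parameters of a 4-sunlet are determined by the six
average pairwise distances. -/
theorem sunlet4_composite_parameters_identifiable
    (dga dgb dab dah dbh dgh μa μb μg μh sa sb ta tb γa γb : ℝ)
    (hreal : Sunlet4Realizes dga dgb dab dah dbh dgh μa μb μg μh sa sb ta tb γa γb) :
    μg = (1 / 2) * (dga + dgb - dab) ∧
    μa + ta = (1 / 2) * (dab + dga - dgb) ∧
    μb + tb = (1 / 2) * (dab + dgb - dga) ∧
    μh + sa * γa + sb * γb = (1 / 2) * (dah + dbh - dab) ∧
    γa * ta = (1 / 2) * (dgh + dab - dah - dgb) ∧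
    γb * tb = (1 / 2) * (dgh + dab - dbh - dga) := by
  obtain ⟨_, _, _, _, _, _, _, _, _, _, _, _, hsum, h1, h2, h3, h4, h5, h6⟩ := hreal
  subst h1 h2 h3 h4 h5 h6
  refine ⟨by ring, by ring, by ring, by nlinarith [hsum], by nlinarith [hsum], by nlinarith [hsum]⟩
end

section
/- Let d be a metric on the four-point set {a, b, g, h} satisfying d_gh + d_ab > d_ah + d_gb, d_gh + d_ab > d_bh + d_ga, and (d_gh + d_ab − d_ah − d_gb)/(d_ab + d_ga − d_gb) + (d_gh + d_ab − d_bh − d_ga)/(d_ab + d_gb − d_ga) ≤ 1, where d_ab + d_ga − d_gb > 0 and d_ab + d_gb − d_ga > 0. Set L = (d_gh + d_ab − d_ah − d_gb)/(d_ab + d_ga − d_gb) and R = (d_gh + d_ab − d_bh − d_ga)/(d_ab + d_gb − d_ga). Then: (i) for every real γ̃ with L ≤ γ̃ ≤ 1 − R, there exist parameters (μ_a, μ_b, μ_g, μ_h, s_a, s_b, t_a, t_b, γ_a, γ_b) with t_a > 0, t_b > 0 and γ_a = γ̃ realizing d by the 4-sunlet distance system; (ii) conversely, for any parameters with t_a >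 0 and t_b > 0 realizing d by the 4-sunlet distance system, one has L ≤ γ_a ≤ 1 − R. Hence γ_a is not identifiable: it can take any value in the interval [L, 1 − R]. -/
set_option maxHeartbeats 1000000 in
/-- The inheritance parameter `γa` of a 4-sunlet is not identifiable from the
average pairwise distances: it can take exactly any value in the interval
`[L, 1 - R]`. Labels: `a = 0, b = 1, g = 2, h = 3`. -/
theorem sunlet4_gamma_not_identifiable (d : Fin 4 → Fin 4 → ℝ)
    (hsymm : ∀ x y, d x y = d y x)
    (hzero : ∀ x, d x x = 0)
    (hnonneg : ∀ x y, 0 ≤ d x y)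
    (htri : ∀ x y z, d x z ≤ d x y + d y z)
    (h1 : d 2 3 + d 0 1 > d 0 3 + d 2 1)
    (h2 : d 2 3 + d 0 1 > d 1 3 + d 2 0)
    (h3 : 0 < d 0 1 + d 2 0 - d 2 1)
    (h4 : 0 < d 0 1 + d 2 1 - d 2 0)
    (L R : ℝ)
    (hL : L = (d 2 3 + d 0 1 - d 0 3 - d 2 1) / (d 0 1 + d 2 0 - d 2 1))
    (hR : R = (d 2 3 + d 0 1 - d 1 3 - d 2 0) / (d 0 1 + d 2 1 - d 2 0))
    (h5 : L + R ≤ 1) :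
    (∀ γt : ℝ, L ≤ γt → γt ≤ 1 - R →
      ∃ μa μb μg μh sa sb ta tb γb : ℝ, 0 < ta ∧ 0 < tb ∧
        Sunlet4Realizes (d 2 0) (d 2 1) (d 0 1) (d 0 3) (d 1 3) (d 2 3)
          μa μb μg μh sa sb ta tb γt γb) ∧
    (∀ μa μb μg μh sa sb ta tb γa γb : ℝ, 0 < ta → 0 < tb →
      Sunlet4Realizes (d 2 0) (d 2 1) (d 0 1) (d 0 3) (d 1 3) (d 2 3)
        μa μb μg μh sa sb ta tb γa γb →
      L ≤ γa ∧ γa ≤ 1 - R) := by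
  have hX : (0:ℝ) < d 2 3 + d 0 1 - d 0 3 - d 2 1 := by linarith
  have hY : (0:ℝ) < d 2 3 + d 0 1 - d 1 3 - d 2 0 := by linarith
  have hL0 : 0 < L := by rw [hL]; exact div_pos hX h3
  have hR0 : 0 < R := by rw [hR]; exact div_pos hY h4
  have hXeq : d 2 3 + d 0 1 - d 0 3 - d 2 1 = L * (d 0 1 + d 2 0 - d 2 1) := by
    rw [hL]; field_simp
  have hYeq : d 2 3 + d 0 1 - d 1 3 - d 2 0 = R * (d 0 1 + d 2 1 - d 2 0) := by
    rw [hR]; field_simp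
  constructor
  · intro γt hγL hγR
    have hγ0 : 0 < γt := lt_of_lt_of_le hL0 hγL
    have hγ1 : γt < 1 := by linarith
    have hγb0 : 0 < 1 - γt := by linarith
    set ta : ℝ := (d 2 3 + d 0 1 - d 0 3 - d 2 1) / (2 * γt) with hta_def
    set tb : ℝ := (d 2 3 + d 0 1 - d 1 3 - d 2 0) / (2 * (1 - γt)) with htb_def
    clear_value ta tb
    have h2g : (0:ℝ) < 2 * γt := by linarith
    have h2gb : (0:ℝ) < 2 * (1 - γt) := by linarith
    have hta_pos : 0 < ta := hta_def ▸ div_pos hX h2g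
    have htb_pos : 0 < tb := htb_def ▸ div_pos hY h2gb
    have hta : γt * ta = (d 2 3 + d 0 1 - d 0 3 - d 2 1) / 2 := by
      rw [hta_def]; field_simp
    have htb : (1 - γt) * tb = (d 2 3 + d 0 1 - d 1 3 - d 2 0) / 2 := by
      rw [htb_def]; field_simp
    have hμa : ta ≤ (d 0 1 + d 2 0 - d 2 1) / 2 := by
      rw [hta_def, div_le_div_iff₀ (by linarith) (by norm_num)]
      nlinarith [mul_le_mul_of_nonneg_right hγL (le_of_lt h3)]
    have hμb : tb ≤ (d 0 1 + d 2 1 - d 2 0) / 2 := by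
      rw [htb_def, div_le_div_iff₀ (by linarith) (by norm_num)]
      have : R ≤ 1 - γt := by linarith
      nlinarith [mul_le_mul_of_nonneg_right this (le_of_lt h4)]
    have hμg : 0 ≤ (d 2 0 + d 2 1 - d 0 1) / 2 := by
      have := htri 0 2 1
      have h02 := hsymm 0 2
      linarith
    have hμh : 0 ≤ (d 0 3 + d 1 3 - d 0 1) / 2 := by
      have := htri 0 3 1
      have h31 := hsymm 3 1
      linarith
    refine ⟨(d 0 1 + d 2 0 - d 2 1) / 2 - ta, (d 0 1 + d 2 1 - d 2 0) / 2 - tb,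
      (d 2 0 + d 2 1 - d 0 1) / 2, (d 0 3 + d 1 3 - d 0 1) / 2, 0, 0, ta, tb,
      1 - γt, hta_pos, htb_pos,
      by linarith, by linarith, hμg, hμh, le_refl 0, le_refl 0,
      le_of_lt hta_pos, le_of_lt htb_pos, hγ0, hγ1, hγb0, by linarith, by ring,
      by ring, by ring, by ring, ?_, ?_, ?_⟩
    · linear_combination hta - htb
    · linear_combination -hta + htb
    · linear_combination -hta - htb
  · intro μa μb μg μh sa sb ta tb γa γb hta htb hreal
    obtain ⟨hμa, hμb, hμg, hμh, hsa, hsb, _, _, hγa0, hγa1, hγb0, hγb1, hγsum,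
      ega, egb, eab, eah, ebh, egh⟩ := hreal
    have eX : d 2 3 + d 0 1 - d 0 3 - d 2 1 = 2 * γa * ta := by
      linear_combination egh + eab - eah - egb - ta * hγsum
    have eY : d 2 3 + d 0 1 - d 1 3 - d 2 0 = 2 * γb * tb := by
      linear_combination egh + eab - ebh - ega - tb * hγsum
    have edenL : d 0 1 + d 2 0 - d 2 1 = 2 * (μa + ta) := by linarith
    have edenR : d 0 1 + d 2 1 - d 2 0 = 2 * (μb + tb) := by linarith
    constructor
    · rw [hL, div_le_iff₀ h3, eX, edenL]
      nlinarith
    · have : R ≤ γb := by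
        rw [hR, div_le_iff₀ h4, eY, edenR]
        nlinarith [mul_nonneg hγb0.le hμb]
      linarith
end

section
/- Suppose six real numbers d_ga, d_gb, d_ab, d_ah, d_bh, d_gh are realized by the 4-sunlet distance system with parameters (μ_a, μ_b, μ_g, μ_h, s_a, s_b, t_a, t_b, γ_a, γ_b) (here t_a, t_b ≥ 0 are allowed to vanish). Then d_gh + d_ab ≥ max{d_ah + d_gb, d_bh + d_ga}, and equality d_gh + d_ab = max{d_ah + d_gb, d_bh + d_ga} holds if and only if t_a = 0 or t_b = 0, i.e., if and only if one of the tree edges in the cycle has zero length. -/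
/-- For distances realized by the 4-sunlet distance system (with `ta, tb ≥ 0`
allowed to vanish), `dgh + dab ≥ max (dah + dgb) (dbh + dga)`, with equality
if and only if one of the cycle tree edges has zero length. -/
theorem sunlet4_four_point_equality_iff_zero_tree_edge
    (dga dgb dab dah dbh dgh μa μb μg μh sa sb ta tb γa γb : ℝ)
    (hreal : Sunlet4Realizes dga dgb dab dah dbh dgh μa μb μg μh sa sb ta tb γa γb) :
    dgh + dab ≥ max (dah + dgb) (dbh + dga) ∧
    (dgh + dab = max (dah + dgb) (dbh + dga) ↔ ta = 0 ∨ tb = 0) := by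
  obtain ⟨hμa, hμb, hμg, hμh, hsa, hsb, hta, htb, hγa, hγa1, hγb, hγb1, hsum,
    e1, e2, e3, e4, e5, e6⟩ := hreal
  have hA : dgh + dab - (dah + dgb) = 2 * γa * ta := by
    linear_combination e6 + e3 - e4 - e2 - ta * hsum
  have hB : dgh + dab - (dbh + dga) = 2 * γb * tb := by
    linear_combination e6 + e3 - e5 - e1 - tb * hsum
  have pa : 0 ≤ 2 * γa * ta := by positivity
  have pb : 0 ≤ 2 * γb * tb := by positivity
  have h1 : dah + dgb ≤ dgh + dab := by linarith
  have h2 : dbh + dga ≤ dgh + dab := by linarith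
  refine ⟨max_le h1 h2, ?_, ?_⟩
  · intro h
    rcases max_choice (dah + dgb) (dbh + dga) with hm | hm <;> rw [hm] at h
    · left
      have hz : γa * ta = 0 := by linarith
      exact (mul_eq_zero.mp hz).resolve_left (ne_of_gt hγa)
    · right
      have hz : γb * tb = 0 := by linarith
      exact (mul_eq_zero.mp hz).resolve_left (ne_of_gt hγb)
  · rintro (h | h)
    · rw [h] at hA
      have heq : dgh + dab = dah + dgb := by linarith [hA, mul_zero (2 * γa)]
      rw [heq]; exact (max_eq_left (by linarith)).symm
    · rw [h] at hB
      have heq : dgh + dab = dbh + dga := by linarith [hB, mul_zero (2 * γb)]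
      rw [heq]; exact (max_eq_right (by linarith)).symm
end

section
/- Suppose six real numbers d_ga, d_gb, d_ab, d_ah, d_bh, d_gh are realized by the 4-sunlet distance system with parameters (μ_a, μ_b, μ_g, μ_h, s_a, s_b, t_a, t_b, γ_a, γ_b) in which t_a > 0 and t_b > 0 (hybrid leaf h). Then the same six numbers are also realized by the 4-sunlet distance system with the roles of g and h exchanged: there exist reals μ'_a, μ'_b, μ'_g, μ'_h, s'_a, s'_b ≥ 0, t'_a > 0, t'_b > 0, γ'_a, γ'_b ∈ (0,1) with γ'_a + γ'_b = 1 such that, writing l'_g = μ'_g + s'_a·γ'_a + s'_b·γ'_b, one has d_ah = (μ'_a + t'_a) + μ'_h, d_bh = (μ'_b + t'_b) + μ'_h, d_ab = (μ'_a + t'_a) + (μ'_b + t'_b), d_ga = l'_g + γ'_b·(t'_a + t'_b) + μ'_a, d_gb = l'_g + γ'_a·(t'_a + t'_b) + μ'_b, and d_gh = l'_g + γ'_a·t'_a + γ'_b·t'_b + μ'_h. Hence the 4-sunlets with the same circular ordering (a,g,b,h) but with hybrid leaf h versus hybrid leaf g cannot be distinguished from average pairwise distances. -/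
/-- Distances realized by a 4-sunlet with hybrid leaf `h` (and positive cycle
tree edges) are also realized by the 4-sunlet with the same circular ordering
`(a,g,b,h)` but with hybrid leaf `g`: the placement of the hybrid node in a
4-cycle cannot be distinguished from average pairwise distances. -/
theorem sunlet4_hybrid_leaf_swap
    (dga dgb dab dah dbh dgh μa μb μg μh sa sb ta tb γa γb : ℝ)
    (hreal : Sunlet4Realizes dga dgb dab dah dbh dgh μa μb μg μh sa sb ta tb γa γb)
    (hta : 0 < ta) (htb : 0 < tb) :
    ∃ μa' μb' μg' μh' sa' sb' ta' tb' γa' γb' : ℝ,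
      0 ≤ μa' ∧ 0 ≤ μb' ∧ 0 ≤ μg' ∧ 0 ≤ μh' ∧ 0 ≤ sa' ∧ 0 ≤ sb' ∧
      0 < ta' ∧ 0 < tb' ∧
      0 < γa' ∧ γa' < 1 ∧ 0 < γb' ∧ γb' < 1 ∧ γa' + γb' = 1 ∧
      dah = (μa' + ta') + μh' ∧
      dbh = (μb' + tb') + μh' ∧
      dab = (μa' + ta') + (μb' + tb') ∧
      dga = (μg' + sa' * γa' + sb' * γb') + γb' * (ta' + tb') + μa' ∧
      dgb = (μg' + sa' * γa' + sb' * γb') + γa' * (ta' + tb') + μb' ∧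
      dgh = (μg' + sa' * γa' + sb' * γb') + γa' * ta' + γb' * tb' + μh' := by
  obtain ⟨hμa, hμb, hμg, hμh, hsa, hsb, _, _, hγa, hγa1, hγb, hγb1, hγ, e1, e2, e3, e4, e5, e6⟩ :=
    hreal
  have hsum : 0 < ta + tb := by linarith
  have hne : ta + tb ≠ 0 := ne_of_gt hsum
  refine ⟨μa, μb, μg, μh + sa * γa + sb * γb, 0, 0,
    γb * (ta + tb), γa * (ta + tb), tb / (ta + tb), ta / (ta + tb),
    hμa, hμb, hμg, by positivity, le_refl 0, le_refl 0,
    by positivity, by positivity,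
    div_pos htb hsum, (div_lt_one hsum).mpr (by linarith),
    div_pos hta hsum, (div_lt_one hsum).mpr (by linarith),
    by field_simp; ring, ?_, ?_, ?_, ?_, ?_, ?_⟩
  · rw [e4]; ring
  · rw [e5]; ring
  · rw [e3]; nlinarith [hγ]
  · rw [e1]; field_simp; linear_combination (-ta*(ta+tb))*hγ
  · rw [e2]; field_simp; linear_combination (-tb*(ta+tb))*hγ
  · rw [e6]; field_simp; ring
end

section
/- Suppose six real numbers d_ga, d_gb, d_ab, d_ah, d_bh, d_gh are realized by the 4-sunlet distance system with parameters (μ_a, μ_b, μ_g, μ_h, s_a, s_b, t_a, t_b, γ_a, γ_b) in which additionally s_a = s_b = 0 (the network is zipped up). Then the canonical split-network edge lengths of the 4-sunlet, defined from the distances, satisfy: (1/2)(d_ga + d_gb − d_ab) = μ_g; (1/2)(d_ga + d_ah − d_gh) = μ_a + γ_b·t_a; (1/2)(d_ah + d_bh − d_ab) = μ_h; (1/2)(d_gb + d_bh − d_gh) = μ_b + γ_a·t_b; (1/2)(d_gh + d_ab − d_ga − d_bh) = γ_b·t_b; and (1/2)(d_gh + d_ab − d_gb − d_ah) = γ_a·t_a.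 -/
/-- For a zipped-up 4-sunlet (hybrid parent edges of length 0, `sa = sb = 0`),
the canonical split-network edge lengths defined from the distances recover
the indicated combinations of parameters. -/
theorem sunlet4_canonical_split_lengths
    (dga dgb dab dah dbh dgh μa μb μg μh sa sb ta tb γa γb : ℝ)
    (hreal : Sunlet4Realizes dga dgb dab dah dbh dgh μa μb μg μh sa sb ta tb γa γb)
    (hsa : sa = 0) (hsb : sb = 0) :
    (1 / 2) * (dga + dgb - dab) = μg ∧
    (1 / 2) * (dga + dah - dgh) = μa + γb * ta ∧
    (1 / 2) * (dah + dbh - dab) = μh ∧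
    (1 / 2) * (dgb + dbh - dgh) = μb + γa * tb ∧
    (1 / 2) * (dgh + dab - dga - dbh) = γb * tb ∧
    (1 / 2) * (dgh + dab - dgb - dah) = γa * ta := by
  obtain ⟨-, -, -, -, -, -, -, -, -, -, -, -, hsum, h1, h2, h3, h4, h5, h6⟩ := hreal
  subst hsa hsb h1 h2 h3 h4 h5 h6
  have hγb : γb = 1 - γa := by linarith
  subst hγb
  refine ⟨by ring, by ring, by ring, by ring, by ring, by ring⟩
end

section
/- The parameters of a zipped-up binary 5-sunlet are identifiable from its average pairwise distances: if two parameter tuples (m_0, m_1, m_2, m_3, m_4, c_1, c_2, c_3, γ) and (m'_0, m'_1, m'_2, m'_3, m'_4, c'_1, c'_2, c'_3, γ'), each with all m_i ≥ 0, all c_i > 0, and γ, γ' ∈ (0,1), induce the same ten pairwise distances d_ij via the zipped-up binary 5-sunlet distance formulas, then the two tuples are equal: m_i = m'_i for all i, c_j = c'_j for all j, and γ = γ'. -/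
/-- Identifiability of the parameters of a zipped-up binary 5-sunlet from its
ten average pairwise distances: two parameter tuples inducing the same
distances are equal. -/
theorem sunlet5_parameters_identifiable
    (m0 m1 m2 m3 m4 c1 c2 c3 γ : ℝ)
    (m0' m1' m2' m3' m4' c1' c2' c3' γ' : ℝ)
    (hm0 : 0 ≤ m0) (hm1 : 0 ≤ m1) (hm2 : 0 ≤ m2) (hm3 : 0 ≤ m3) (hm4 : 0 ≤ m4)
    (hc1 : 0 < c1) (hc2 : 0 < c2) (hc3 : 0 < c3)
    (hγ : 0 < γ) (hγ' : γ < 1)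
    (hm0' : 0 ≤ m0') (hm1' : 0 ≤ m1') (hm2' : 0 ≤ m2') (hm3' : 0 ≤ m3')
    (hm4' : 0 ≤ m4')
    (hc1' : 0 < c1') (hc2' : 0 < c2') (hc3' : 0 < c3')
    (hγ2 : 0 < γ') (hγ2' : γ' < 1)
    (h01 : m0 + m1 + (1 - γ) * (c1 + c2 + c3)
         = m0' + m1' + (1 - γ') * (c1' + c2' + c3'))
    (h02 : m0 + m2 + γ * c1 + (1 - γ) * (c2 + c3)
         = m0' + m2' + γ' * c1' + (1 - γ') * (c2' + c3'))
    (h03 : m0 + m3 + γ * (c1 + c2) + (1 - γ) * c3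
         = m0' + m3' + γ' * (c1' + c2') + (1 - γ') * c3')
    (h04 : m0 + m4 + γ * (c1 + c2 + c3)
         = m0' + m4' + γ' * (c1' + c2' + c3'))
    (h12 : m1 + c1 + m2 = m1' + c1' + m2')
    (h13 : m1 + c1 + c2 + m3 = m1' + c1' + c2' + m3')
    (h14 : m1 + c1 + c2 + c3 + m4 = m1' + c1' + c2' + c3' + m4')
    (h23 : m2 + c2 + m3 = m2' + c2' + m3')
    (h24 : m2 + c2 + c3 + m4 = m2' + c2' + c3' + m4')
    (h34 : m3 + c3 + m4 = m3' + c3' + m4') :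
    m0 = m0' ∧ m1 = m1' ∧ m2 = m2' ∧ m3 = m3' ∧ m4 = m4' ∧
    c1 = c1' ∧ c2 = c2' ∧ c3 = c3' ∧ γ = γ' := by
  have hm2e : m2 = m2' := by linarith
  have hm3e : m3 = m3' := by linarith
  have hc2e : c2 = c2' := by linarith
  have hge : γ = γ' := by
    have key : (2*γ-1)*c2 = (2*γ'-1)*c2 := by
      linear_combination h03 - h02 - hm3e + hm2e + (1-2*γ')*hc2e
    have h2 : (2*γ-1) = (2*γ'-1) := mul_right_cancel₀ (ne_of_gt hc2) key
    linarith
  subst hge; subst hc2e; subst hm2e; subst hm3e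
  have hA : m1 + c1 = m1' + c1' := by linarith
  have hB : m4 + c3 = m4' + c3' := by linarith
  have hm0e : m0 = m0' := by linear_combination (h01 + h04 - hA - hB)/2
  have hc1e : c1 = c1' := by
    have h : γ * (c1 - c1') = 0 := by linear_combination (hA - h01 + h02)/2
    have := mul_eq_zero.mp h
    rcases this with h' | h'
    · exact absurd h' (ne_of_gt hγ)
    · linarith
  have hm1e : m1 = m1' := by linarith
  have hc3e : c3 = c3' := by
    have h : (1 - γ) * (c3 - c3') = 0 := by
      linear_combination h02 - hm0e - γ*hc1e
    rcases mul_eq_zero.mp h with h' | h'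
    · linarith
    · linarith
  have hm4e : m4 = m4' := by linarith
  exact ⟨hm0e, hm1e, rfl, rfl, hm4e, hc1e, rfl, hc3e, rfl⟩
end

section
/- Consider the average pairwise distances d_ij of a zipped-up binary 5-sunlet with all m_i ≥ 0, all c_j > 0, and γ ∈ (0,1). Then: (i) the quartet {u_1, u_2, u_3, u_4} satisfies the 4-point condition, namely d_12 + d_34 ≤ d_13 + d_24 = d_14 + d_23; and (ii) for every choice of indices 1 ≤ i < j < k ≤ 4, the set {u_0, u_i, u_j, u_k} does NOT satisfy the 4-point condition: no partition of these four leaves into two pairs satisfies it, because the maximum of the three pairwise sums d(u_0,x) + d(y,z) (over the three pairings) is attained by exactly one pairing, strictly. Consequently the leaf of hybrid origin u_0 is the unique leaf u such that every quartet containing u fails the 4-point condition. -/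
/-- `d` satisfies the 4-point condition on the quartet (pairing) `xy|uv`. -/
def FourPointQuartet (d : Fin 5 → Fin 5 → ℝ) (x y u v : Fin 5) : Prop :=
  d x y + d u v ≤ d x u + d y v ∧ d x u + d y v = d x v + d y u

/-- `d` satisfies the 4-point condition for the set `{x, y, u, v}`: some
partition of the four points into two pairs satisfies it. -/
def FourPointSet (d : Fin 5 → Fin 5 → ℝ) (x y u v : Fin 5) : Prop :=
  FourPointQuartet d x y u v ∨ FourPointQuartet d x u y v ∨
    FourPointQuartet d x v y u

set_option maxHeartbeats 4000000 in
/-- In a zipped-up binary 5-sunlet (hybrid leaf `u₀ = 0`), the quartet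
`{u₁,u₂,u₃,u₄}` satisfies the 4-point condition, every quartet containing `u₀`
fails the 4-point condition, and hence `u₀` is the unique leaf all of whose
quartets fail the 4-point condition. -/
theorem sunlet5_hybrid_leaf_detected (d : Fin 5 → Fin 5 → ℝ)
    (m0 m1 m2 m3 m4 c1 c2 c3 γ : ℝ)
    (hm0 : 0 ≤ m0) (hm1 : 0 ≤ m1) (hm2 : 0 ≤ m2) (hm3 : 0 ≤ m3) (hm4 : 0 ≤ m4)
    (hc1 : 0 < c1) (hc2 : 0 < c2) (hc3 : 0 < c3)
    (hγ : 0 < γ) (hγ' : γ < 1)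
    (hsymm : ∀ x y, d x y = d y x)
    (h01 : d 0 1 = m0 + m1 + (1 - γ) * (c1 + c2 + c3))
    (h02 : d 0 2 = m0 + m2 + γ * c1 + (1 - γ) * (c2 + c3))
    (h03 : d 0 3 = m0 + m3 + γ * (c1 + c2) + (1 - γ) * c3)
    (h04 : d 0 4 = m0 + m4 + γ * (c1 + c2 + c3))
    (h12 : d 1 2 = m1 + c1 + m2)
    (h13 : d 1 3 = m1 + c1 + c2 + m3)
    (h14 : d 1 4 = m1 + c1 + c2 + c3 + m4)
    (h23 : d 2 3 = m2 + c2 + m3)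
    (h24 : d 2 4 = m2 + c2 + c3 + m4)
    (h34 : d 3 4 = m3 + c3 + m4) :
    (d 1 2 + d 3 4 ≤ d 1 3 + d 2 4 ∧ d 1 3 + d 2 4 = d 1 4 + d 2 3) ∧
    (∀ i j k : Fin 5, 1 ≤ i → i < j → j < k → ¬ FourPointSet d 0 i j k) ∧
    (∀ u : Fin 5,
      (∀ x y z : Fin 5, x ≠ u → y ≠ u → z ≠ u → x ≠ y → x ≠ z → y ≠ z →
        ¬ FourPointSet d u x y z) ↔ u = 0) := by
  have e01 : d 0 1 = m0 + m1 + (1-γ)*c1 + (1-γ)*c2 + (1-γ)*c3 := by rw [h01]; ring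
  have e02 : d 0 2 = m0 + m2 + γ*c1 + (1-γ)*c2 + (1-γ)*c3 := by rw [h02]; ring
  have e03 : d 0 3 = m0 + m3 + γ*c1 + γ*c2 + (1-γ)*c3 := by rw [h03]; ring
  have e04 : d 0 4 = m0 + m4 + γ*c1 + γ*c2 + γ*c3 := by rw [h04]; ring
  have e10 : d 1 0 = m0 + m1 + (1-γ)*c1 + (1-γ)*c2 + (1-γ)*c3 := by rw [hsymm]; exact e01
  have e20 : d 2 0 = m0 + m2 + γ*c1 + (1-γ)*c2 + (1-γ)*c3 := by rw [hsymm]; exact e02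
  have e30 : d 3 0 = m0 + m3 + γ*c1 + γ*c2 + (1-γ)*c3 := by rw [hsymm]; exact e03
  have e40 : d 4 0 = m0 + m4 + γ*c1 + γ*c2 + γ*c3 := by rw [hsymm]; exact e04
  have e21 : d 2 1 = m1 + c1 + m2 := by rw [hsymm]; exact h12
  have e31 : d 3 1 = m1 + c1 + c2 + m3 := by rw [hsymm]; exact h13
  have e41 : d 4 1 = m1 + c1 + c2 + c3 + m4 := by rw [hsymm]; exact h14
  have e32 : d 3 2 = m2 + c2 + m3 := by rw [hsymm]; exact h23
  have e42 : d 4 2 = m2 + c2 + c3 + m4 := by rw [hsymm]; exact h24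
  have e43 : d 4 3 = m3 + c3 + m4 := by rw [hsymm]; exact h34
  have p1 : 0 < γ*c1 := mul_pos hγ hc1
  have p2 : 0 < γ*c2 := mul_pos hγ hc2
  have p3 : 0 < γ*c3 := mul_pos hγ hc3
  have q1 : 0 < (1-γ)*c1 := mul_pos (by linarith) hc1
  have q2 : 0 < (1-γ)*c2 := mul_pos (by linarith) hc2
  have q3 : 0 < (1-γ)*c3 := mul_pos (by linarith) hc3
  have i1 : γ*c1 + (1-γ)*c1 = c1 := by ring
  have i2 : γ*c2 + (1-γ)*c2 = c2 := by ring
  have i3 : γ*c3 + (1-γ)*c3 = c3 := by ring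
  have K123 : ¬ FourPointSet d 0 1 2 3 := by
    rintro (⟨a, b⟩ | ⟨a, b⟩ | ⟨a, b⟩) <;> linarith
  have K124 : ¬ FourPointSet d 0 1 2 4 := by
    rintro (⟨a, b⟩ | ⟨a, b⟩ | ⟨a, b⟩) <;> linarith
  have K132 : ¬ FourPointSet d 0 1 3 2 := by
    rintro (⟨a, b⟩ | ⟨a, b⟩ | ⟨a, b⟩) <;> linarith
  have K134 : ¬ FourPointSet d 0 1 3 4 := by
    rintro (⟨a, b⟩ | ⟨a, b⟩ | ⟨a, b⟩) <;> linarith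
  have K142 : ¬ FourPointSet d 0 1 4 2 := by
    rintro (⟨a, b⟩ | ⟨a, b⟩ | ⟨a, b⟩) <;> linarith
  have K143 : ¬ FourPointSet d 0 1 4 3 := by
    rintro (⟨a, b⟩ | ⟨a, b⟩ | ⟨a, b⟩) <;> linarith
  have K213 : ¬ FourPointSet d 0 2 1 3 := by
    rintro (⟨a, b⟩ | ⟨a, b⟩ | ⟨a, b⟩) <;> linarith
  have K214 : ¬ FourPointSet d 0 2 1 4 := by
    rintro (⟨a, b⟩ | ⟨a, b⟩ | ⟨a, b⟩) <;> linarith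
  have K231 : ¬ FourPointSet d 0 2 3 1 := by
    rintro (⟨a, b⟩ | ⟨a, b⟩ | ⟨a, b⟩) <;> linarith
  have K234 : ¬ FourPointSet d 0 2 3 4 := by
    rintro (⟨a, b⟩ | ⟨a, b⟩ | ⟨a, b⟩) <;> linarith
  have K241 : ¬ FourPointSet d 0 2 4 1 := by
    rintro (⟨a, b⟩ | ⟨a, b⟩ | ⟨a, b⟩) <;> linarith
  have K243 : ¬ FourPointSet d 0 2 4 3 := by
    rintro (⟨a, b⟩ | ⟨a, b⟩ | ⟨a, b⟩) <;> linarith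
  have K312 : ¬ FourPointSet d 0 3 1 2 := by
    rintro (⟨a, b⟩ | ⟨a, b⟩ | ⟨a, b⟩) <;> linarith
  have K314 : ¬ FourPointSet d 0 3 1 4 := by
    rintro (⟨a, b⟩ | ⟨a, b⟩ | ⟨a, b⟩) <;> linarith
  have K321 : ¬ FourPointSet d 0 3 2 1 := by
    rintro (⟨a, b⟩ | ⟨a, b⟩ | ⟨a, b⟩) <;> linarith
  have K324 : ¬ FourPointSet d 0 3 2 4 := by
    rintro (⟨a, b⟩ | ⟨a, b⟩ | ⟨a, b⟩) <;> linarith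
  have K341 : ¬ FourPointSet d 0 3 4 1 := by
    rintro (⟨a, b⟩ | ⟨a, b⟩ | ⟨a, b⟩) <;> linarith
  have K342 : ¬ FourPointSet d 0 3 4 2 := by
    rintro (⟨a, b⟩ | ⟨a, b⟩ | ⟨a, b⟩) <;> linarith
  have K412 : ¬ FourPointSet d 0 4 1 2 := by
    rintro (⟨a, b⟩ | ⟨a, b⟩ | ⟨a, b⟩) <;> linarith
  have K413 : ¬ FourPointSet d 0 4 1 3 := by
    rintro (⟨a, b⟩ | ⟨a, b⟩ | ⟨a, b⟩) <;> linarith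
  have K421 : ¬ FourPointSet d 0 4 2 1 := by
    rintro (⟨a, b⟩ | ⟨a, b⟩ | ⟨a, b⟩) <;> linarith
  have K423 : ¬ FourPointSet d 0 4 2 3 := by
    rintro (⟨a, b⟩ | ⟨a, b⟩ | ⟨a, b⟩) <;> linarith
  have K431 : ¬ FourPointSet d 0 4 3 1 := by
    rintro (⟨a, b⟩ | ⟨a, b⟩ | ⟨a, b⟩) <;> linarith
  have K432 : ¬ FourPointSet d 0 4 3 2 := by
    rintro (⟨a, b⟩ | ⟨a, b⟩ | ⟨a, b⟩) <;> linarith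
  have key : ∀ x y z : Fin 5, x ≠ 0 → y ≠ 0 → z ≠ 0 → x ≠ y → x ≠ z → y ≠ z →
      ¬ FourPointSet d 0 x y z := by
    intro x y z hx hy hz hxy hxz hyz
    fin_cases x <;> fin_cases y <;> fin_cases z <;>
      first
        | exact absurd rfl hx
        | exact absurd rfl hy
        | exact absurd rfl hz
        | exact absurd rfl hxy
        | exact absurd rfl hxz
        | exact absurd rfl hyz
        | exact K123
        | exact K124
        | exact K132
        | exact K134
        | exact K142
        | exact K143
        | exact K213
        | exact K214
        | exact K231
        | exact K234
        | exact K241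
        | exact K243
        | exact K312
        | exact K314
        | exact K321
        | exact K324
        | exact K341
        | exact K342
        | exact K412
        | exact K413
        | exact K421
        | exact K423
        | exact K431
        | exact K432
  have F1 : FourPointSet d 1 2 3 4 := Or.inl ⟨by linarith, by linarith⟩
  have F2 : FourPointSet d 2 1 3 4 := Or.inl ⟨by linarith, by linarith⟩
  have F3 : FourPointSet d 3 1 2 4 := Or.inr (Or.inr ⟨by linarith, by linarith⟩)
  have F4 : FourPointSet d 4 1 2 3 := Or.inr (Or.inr ⟨by linarith, by linarith⟩)
  refine ⟨⟨by linarith, by linarith⟩, ?_, ?_⟩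
  · intro i j k h1i hij hjk
    have hi0 : i ≠ 0 := (lt_of_lt_of_le (by decide : (0:Fin 5) < 1) h1i).ne'
    have hj0 : j ≠ 0 := (lt_of_le_of_lt (Fin.zero_le i) hij).ne'
    have hk0 : k ≠ 0 := (lt_of_le_of_lt (Fin.zero_le j) hjk).ne'
    exact key i j k hi0 hj0 hk0 hij.ne (hij.trans hjk).ne hjk.ne
  · intro u
    constructor
    · intro H
      by_contra h
      fin_cases u
      · exact h rfl
      · exact H 2 3 4 (by decide) (by decide) (by decide) (by decide) (by decide)
          (by decide) F1
      · exact H 1 3 4 (by decide) (by decide) (by decide) (by decide) (by decide)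
          (by decide) F2
      · exact H 1 2 4 (by decide) (by decide) (by decide) (by decide) (by decide)
          (by decide) F3
      · exact H 1 2 3 (by decide) (by decide) (by decide) (by decide) (by decide)
          (by decide) F4
    · rintro rfl
      exact fun x y z => key x y z
end

section
/- With the quartet sums S_a, S_b, S_c of the level-2 example network defined as in the context, the following three equivalences hold: S_b = S_c if and only if γ_3 = t_2/(t_1 + t_2); S_a = S_b if and only if γ_6 = γ_4·t_2/(γ_4·(t_1 + t_2) + t_5); and S_a = S_c if and only if γ_6 = γ_3·t_1/(t_1 + t_5). Consequently, outside a subset of parameter space of Lebesgue measure zero, the three sums S_a, S_b, S_c take distinct values (so all non-trivial splits of the four taxa violate the 4-point condition and the distance split tree is a star). -/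
/-- Quartet sum `S_a = d(o,a) + d(b,c)` of the level-2 example network, as a
function of the parameters (with `γ₄ = 1 - γ₃` and `γ₇ = 1 - γ₆`). -/
noncomputable def quartetSumA (S0 t1 t2 t5 γ3 γ6 : ℝ) : ℝ :=
  S0 + γ6 * (γ3 * t1 + (1 - γ3) * t2)
    + (1 - γ6) * (2 * (γ3 * t1 + (1 - γ3) * t2)
        + (γ3 * t2 + (1 - γ3) * t1 + t5))

/-- Quartet sum `S_b = d(o,b) + d(a,c)` of the level-2 example network. -/
noncomputable def quartetSumB (S0 t1 t2 t5 γ3 γ6 : ℝ) : ℝ :=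
  S0 + γ6 * ((γ3 * t1 + (1 - γ3) * t2) + 2 * ((1 - γ3) * t1 + t5))
    + (1 - γ6) * (2 * γ3 * t1 + (γ3 * t2 + (1 - γ3) * t1 + t5))

/-- Quartet sum `S_c = d(o,c) + d(a,b)` of the level-2 example network. -/
noncomputable def quartetSumC (S0 t1 t2 t5 γ3 γ6 : ℝ) : ℝ :=
  S0 + γ6 * ((γ3 * t1 + (1 - γ3) * t2) + 2 * ((1 - γ3) * t1 + t5))
    + (1 - γ6) * (2 * (1 - γ3) * t2 + (γ3 * t2 + (1 - γ3) * t1 + t5))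

open MeasureTheory

lemma ae_ne_real (c : ℝ) : ∀ᵐ x : ℝ ∂volume, x ≠ c := by
  rw [ae_iff]
  have h : {x : ℝ | ¬ x ≠ c} = {c} := by ext x; simp
  rw [h]; exact measure_singleton c

lemma null5 (s : Set (ℝ × ℝ × ℝ × ℝ × ℝ)) (hs : MeasurableSet s)
    (h : ∀ᵐ a : ℝ ∂volume, ∀ᵐ b : ℝ ∂volume, ∀ᵐ c : ℝ ∂volume, ∀ᵐ d : ℝ ∂volume,
      volume {e : ℝ | (a, b, c, d, e) ∈ s} = 0) :
    volume s = 0 := by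
  rw [Measure.volume_eq_prod _ _, Measure.measure_prod_null hs]
  filter_upwards [h] with a ha
  show volume (Prod.mk a ⁻¹' s) = 0
  have hs1 : MeasurableSet (Prod.mk a ⁻¹' s) := hs.preimage measurable_prodMk_left
  rw [Measure.volume_eq_prod _ _, Measure.measure_prod_null hs1]
  filter_upwards [ha] with b hb
  show volume (Prod.mk b ⁻¹' (Prod.mk a ⁻¹' s)) = 0
  have hs2 : MeasurableSet (Prod.mk b ⁻¹' (Prod.mk a ⁻¹' s)) :=
    hs1.preimage measurable_prodMk_left
  rw [Measure.volume_eq_prod _ _, Measure.measure_prod_null hs2]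
  filter_upwards [hb] with c hc
  show volume (Prod.mk c ⁻¹' (Prod.mk b ⁻¹' (Prod.mk a ⁻¹' s))) = 0
  have hs3 : MeasurableSet (Prod.mk c ⁻¹' (Prod.mk b ⁻¹' (Prod.mk a ⁻¹' s))) :=
    hs2.preimage measurable_prodMk_left
  rw [Measure.volume_eq_prod _ _, Measure.measure_prod_null hs3]
  filter_upwards [hc] with d hd
  exact hd

lemma quartet_bad_null (S0 : ℝ) :
    MeasureTheory.volume {p : ℝ × ℝ × ℝ × ℝ × ℝ |
      ¬ (quartetSumA S0 p.1 p.2.1 p.2.2.1 p.2.2.2.1 p.2.2.2.2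
            ≠ quartetSumB S0 p.1 p.2.1 p.2.2.1 p.2.2.2.1 p.2.2.2.2 ∧
          quartetSumB S0 p.1 p.2.1 p.2.2.1 p.2.2.2.1 p.2.2.2.2
            ≠ quartetSumC S0 p.1 p.2.1 p.2.2.1 p.2.2.2.1 p.2.2.2.2 ∧
          quartetSumA S0 p.1 p.2.1 p.2.2.1 p.2.2.2.1 p.2.2.2.2
            ≠ quartetSumC S0 p.1 p.2.1 p.2.2.1 p.2.2.2.1 p.2.2.2.2)} = 0 := by
  set A : ℝ × ℝ × ℝ × ℝ × ℝ → ℝ :=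
    fun p => quartetSumA S0 p.1 p.2.1 p.2.2.1 p.2.2.2.1 p.2.2.2.2 with hAdef
  set B : ℝ × ℝ × ℝ × ℝ × ℝ → ℝ :=
    fun p => quartetSumB S0 p.1 p.2.1 p.2.2.1 p.2.2.2.1 p.2.2.2.2 with hBdef
  set C : ℝ × ℝ × ℝ × ℝ × ℝ → ℝ :=
    fun p => quartetSumC S0 p.1 p.2.1 p.2.2.1 p.2.2.2.1 p.2.2.2.2 with hCdef
  have hA : Measurable A := by unfold A; unfold quartetSumA; fun_prop
  have hB : Measurable B := by unfold B; unfold quartetSumB; fun_prop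
  have hC : Measurable C := by unfold C; unfold quartetSumC; fun_prop
  have hset : {p : ℝ × ℝ × ℝ × ℝ × ℝ | ¬ (A p ≠ B p ∧ B p ≠ C p ∧ A p ≠ C p)}
      = ({p | A p = B p} ∪ {p | B p = C p} ∪ {p | A p = C p}) := by
    ext p
    simp only [Set.mem_setOf_eq, Set.mem_union, ne_eq]
    tauto
  show volume {p : ℝ × ℝ × ℝ × ℝ × ℝ | ¬ (A p ≠ B p ∧ B p ≠ C p ∧ A p ≠ C p)} = 0
  have hs : MeasurableSet
      {p : ℝ × ℝ × ℝ × ℝ × ℝ | ¬ (A p ≠ B p ∧ B p ≠ C p ∧ A p ≠ C p)} := by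
    rw [hset]
    exact ((measurableSet_eq_fun hA hB).union (measurableSet_eq_fun hB hC)).union
      (measurableSet_eq_fun hA hC)
  apply null5 _ hs
  refine MeasureTheory.ae_of_all _ fun a => ?_
  filter_upwards [ae_ne_real (-a)] with b hb
  filter_upwards [ae_ne_real (-a)] with c hc
  filter_upwards [ae_ne_real (b / (a + b)), ae_ne_real ((a + b + c) / (a + b))]
    with d hd1 hd2
  have hab : a + b ≠ 0 := fun h => hb (by linarith)
  have hac : a + c ≠ 0 := fun h => hc (by linarith)
  have hK : (1 - d) * (a + b) + c ≠ 0 := by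
    intro h
    apply hd2
    rw [eq_div_iff hab]
    linarith
  have hbc : d * (a + b) - b ≠ 0 := by
    intro h
    apply hd1
    rw [eq_div_iff hab]
    linarith
  have hsub : {e : ℝ | (a, b, c, d, e) ∈
      {p : ℝ × ℝ × ℝ × ℝ × ℝ | ¬ (A p ≠ B p ∧ B p ≠ C p ∧ A p ≠ C p)}} ⊆
      ({(1 - d) * b / ((1 - d) * (a + b) + c)} ∪ {(1 : ℝ)} ∪ {d * a / (a + c)}) := by
    intro e he
    simp only [Set.mem_setOf_eq, hAdef, hBdef, hCdef, quartetSumA, quartetSumB,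
      quartetSumC, ne_eq, not_and_or, not_not] at he
    simp only [Set.mem_union, Set.mem_singleton_iff]
    rcases he with h | h | h
    · left; left
      rw [eq_div_iff hK]
      linear_combination (-1/2 : ℝ) * h
    · left; right
      have h0 : (1 - e) * (d * (a + b) - b) = 0 := by linear_combination (1/2 : ℝ) * h
      rcases mul_eq_zero.1 h0 with h1 | h1
      · linarith
      · exact absurd h1 hbc
    · right
      rw [eq_div_iff hac]
      linear_combination (-1/2 : ℝ) * h
  refine measure_mono_null hsub ?_
  exact measure_union_null (measure_union_null (measure_singleton _) (measure_singleton _))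
    (measure_singleton _)

/-- The three equalities among the quartet sums `S_a, S_b, S_c` of the level-2
example network are each equivalent to an algebraic condition on the
parameters; consequently the parameters for which the three sums are not
pairwise distinct form a set of Lebesgue measure zero. -/
theorem level2_example_quartet_sums (t1 t2 t5 γ3 γ6 γ4 γ7 S0 u v Sa Sb Sc : ℝ)
    (ht1 : 0 < t1) (ht2 : 0 < t2) (ht5 : 0 < t5)
    (hγ3 : 0 < γ3) (hγ3' : γ3 < 1) (hγ6 : 0 < γ6) (hγ6' : γ6 < 1)
    (hγ4 : γ4 = 1 - γ3) (hγ7 : γ7 = 1 - γ6)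
    (hu : u = γ3 * t1 + γ4 * t2) (hv : v = γ3 * t2 + γ4 * t1 + t5)
    (hSa : Sa = S0 + γ6 * u + γ7 * (2 * (γ3 * t1 + γ4 * t2) + v))
    (hSb : Sb = S0 + γ6 * (u + 2 * (γ4 * t1 + t5)) + γ7 * (2 * γ3 * t1 + v))
    (hSc : Sc = S0 + γ6 * (u + 2 * (γ4 * t1 + t5)) + γ7 * (2 * γ4 * t2 + v)) :
    (Sb = Sc ↔ γ3 = t2 / (t1 + t2)) ∧
    (Sa = Sb ↔ γ6 = γ4 * t2 / (γ4 * (t1 + t2) + t5)) ∧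
    (Sa = Sc ↔ γ6 = γ3 * t1 / (t1 + t5)) ∧
    MeasureTheory.volume {p : ℝ × ℝ × ℝ × ℝ × ℝ |
      ¬ (quartetSumA S0 p.1 p.2.1 p.2.2.1 p.2.2.2.1 p.2.2.2.2
            ≠ quartetSumB S0 p.1 p.2.1 p.2.2.1 p.2.2.2.1 p.2.2.2.2 ∧
          quartetSumB S0 p.1 p.2.1 p.2.2.1 p.2.2.2.1 p.2.2.2.2
            ≠ quartetSumC S0 p.1 p.2.1 p.2.2.1 p.2.2.2.1 p.2.2.2.2 ∧
          quartetSumA S0 p.1 p.2.1 p.2.2.1 p.2.2.2.1 p.2.2.2.2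
            ≠ quartetSumC S0 p.1 p.2.1 p.2.2.1 p.2.2.2.1 p.2.2.2.2)} = 0 := by
  subst hγ4 hγ7 hu hv hSa hSb hSc
  have h16 : (1 : ℝ) - γ6 ≠ 0 := by linarith
  have h12 : t1 + t2 ≠ 0 := by positivity
  have h15 : t1 + t5 ≠ 0 := by positivity
  have hD2 : (1 - γ3) * (t1 + t2) + t5 ≠ 0 := by nlinarith
  refine ⟨⟨?_, ?_⟩, ⟨?_, ?_⟩, ⟨?_, ?_⟩, quartet_bad_null S0⟩
  · intro h
    have h2 : (1 - γ6) * (γ3 * (t1 + t2) - t2) = 0 := by linear_combination (1/2 : ℝ) * h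
    rw [eq_div_iff h12]
    rcases mul_eq_zero.1 h2 with h3 | h3
    · exact absurd h3 h16
    · linarith
  · intro h
    have key : γ3 * (t1 + t2) = t2 := by rw [h]; field_simp
    linear_combination (2 * (1 - γ6)) * key
  · intro h
    rw [eq_div_iff hD2]
    linear_combination (-1/2 : ℝ) * h
  · intro h
    have key : γ6 * ((1 - γ3) * (t1 + t2) + t5) = (1 - γ3) * t2 := by
      rw [h]; field_simp
    linear_combination (-2 : ℝ) * key
  · intro h
    rw [eq_div_iff h15]
    linear_combination (-1/2 : ℝ) * h
  · intro h
    have key : γ6 * (t1 + t5) = γ3 * t1 := by rw [h]; field_simp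
    linear_combination (-2 : ℝ) * key
end
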